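/- Assume additionally that Δ_x ≤ 15/2 for every x ∈ X. Let α be the number of indices r ∈ {1, …, R_I − 1} with U_r ≠ U_{r+1}. Then R_I ≤ α + 2 + log_{5/4}( 900 · log₂(15/Δ₂) · ψ* / ρ(𝒴*(X)) ). (This is the instance-sensitive batch-complexity bound of Theorem 4.1.) -/

import Mathlib

/-!
Write `a_t = ρ(𝒴(X ∖ {x : Δ_x > 15·2^{-t}}))`, so that `H_r = ∑_{t ≤ T̄_r} 4^t a_t`. Because
`L̂_{r+1} ≥ 4 L̄_r`, the `T̄_r` increase strictly and `H_r` is nondecreasing. If `U_r = U_{r+1}`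
then `a_{T̄_{r+1}} = a_{T̄_r}`, so the new top term
`4^{T̄_{r+1}} a_{T̄_r} > L̂_{r+1} a_{T̄_r} / 4 ≥ H_r / 4` and `H` grows by the factor `5/4`.
Starting from `H_1 = 4ρ(𝒴(X)) ≥ ρ(𝒴*(X))`, this bounds the number of such rounds before
`R_I - 1` by `log_{5/4}(H_{R_I - 1} / ρ(𝒴*(X)))`. Finally each term `4^t a_t` is at most
`900 ψ*`, since the arms surviving round `t` have gaps at most `15·2^{-t}` and
`‖x - x'‖²_{A⁻¹} ≤ 2‖x - x*‖²_{A⁻¹} + 2‖x' - x*‖²_{A⁻¹}`, while `T̄_{R_I - 1} ≤ log₂(15/Δ₂)`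
because a suboptimal arm survives round `R_I - 1`.
-/

open Matrix

noncomputable section

/-- The probability simplex of design weights over the arm set `X`. -/
def designSimplex {d : ℕ} (X : Finset (Fin d → ℝ)) : Set ((Fin d → ℝ) → ℝ) :=
  {l | (∀ x, 0 ≤ l x) ∧ ∑ x ∈ X, l x = 1}

/-- The design matrix `A(λ) = ∑_{x ∈ X} λ_x x xᵀ`. -/
def designMat {d : ℕ} (X : Finset (Fin d → ℝ)) (l : (Fin d → ℝ) → ℝ) :
    Matrix (Fin d) (Fin d) ℝ :=
  ∑ x ∈ X, l x • Matrix.vecMulVec x x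

/-- The quadratic form `y ↦ yᵀ A(λ)⁻¹ y`. -/
def quadInv {d : ℕ} (X : Finset (Fin d → ℝ)) (l : (Fin d → ℝ) → ℝ)
    (y : Fin d → ℝ) : ℝ :=
  y ⬝ᵥ (designMat X l)⁻¹.mulVec y

/-- The optimal design value `ρ(A) = inf_{λ : A(λ) invertible} max_{y ∈ A} yᵀA(λ)⁻¹y`
(the maximum over the empty set being `0`). -/
def rho {d : ℕ} (X : Finset (Fin d → ℝ)) (A : Set (Fin d → ℝ)) : ℝ :=
  sInf {v | ∃ l ∈ designSimplex X, IsUnit (designMat X l).det ∧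
    v = sSup (insert 0 (quadInv X l '' A))}

/-- `𝒴(S) = {x - x' : x, x' ∈ S, x ≠ x'}`. -/
def Yset {d : ℕ} (S : Set (Fin d → ℝ)) : Set (Fin d → ℝ) :=
  {y | ∃ x ∈ S, ∃ x' ∈ S, x ≠ x' ∧ y = x - x'}

/-- `𝒴*(S) = {x* - x : x ∈ S, x ≠ x*}`. -/
def YstarSet {d : ℕ} (xstar : Fin d → ℝ) (S : Set (Fin d → ℝ)) : Set (Fin d → ℝ) :=
  (fun x => xstar - x) '' (S \ {xstar})

/-- `ψ* = inf_{λ : A(λ) invertible} max_{x ∈ X, x ≠ x*} (x-x*)ᵀA(λ)⁻¹(x-x*)/Δ_x²`. -/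
def psiStar {d : ℕ} (X : Finset (Fin d → ℝ)) (θstar xstar : Fin d → ℝ) : ℝ :=
  sInf {v | ∃ l ∈ designSimplex X, IsUnit (designMat X l).det ∧
    v = sSup (insert 0
      ((fun x => quadInv X l (x - xstar) / (θstar ⬝ᵥ (xstar - x)) ^ 2) ''
        ((X : Set (Fin d → ℝ)) \ {xstar})))}

open Finset

section Design

variable {d : ℕ} (X : Finset (Fin d → ℝ)) (l : (Fin d → ℝ) → ℝ)

lemma dotProduct_designMat_mulVec (u v : Fin d → ℝ) :
    u ⬝ᵥ designMat X l *ᵥ v = ∑ x ∈ X, l x * (x ⬝ᵥ u) * (x ⬝ᵥ v) := by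
  rw [designMat, sum_mulVec, dotProduct_sum]
  refine sum_congr rfl fun x _ => ?_
  rw [smul_mulVec, vecMulVec_mulVec, op_smul_eq_smul, dotProduct_smul, dotProduct_smul,
    dotProduct_comm u, smul_eq_mul, smul_eq_mul]
  ring

variable {X l}

lemma quadInv_eq_sum (hdet : IsUnit (designMat X l).det) (y : Fin d → ℝ) :
    quadInv X l y = ∑ x ∈ X, l x * (x ⬝ᵥ (designMat X l)⁻¹ *ᵥ y) ^ 2 := by
  set z := (designMat X l)⁻¹ *ᵥ y
  have hz : designMat X l *ᵥ z = y := by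
    rw [mulVec_mulVec, mul_nonsing_inv _ hdet, one_mulVec]
  calc quadInv X l y = z ⬝ᵥ designMat X l *ᵥ z := by rw [hz, dotProduct_comm]; rfl
    _ = _ := by rw [dotProduct_designMat_mulVec]; exact sum_congr rfl fun x _ => by ring

lemma quadInv_nonneg (hl : ∀ x, 0 ≤ l x) (hdet : IsUnit (designMat X l).det)
    (y : Fin d → ℝ) : 0 ≤ quadInv X l y := by
  rw [quadInv_eq_sum hdet]
  exact sum_nonneg fun x _ => mul_nonneg (hl x) (sq_nonneg _)

lemma quadInv_sub_le (hl : ∀ x, 0 ≤ l x) (hdet : IsUnit (designMat X l).det)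
    (u v : Fin d → ℝ) : quadInv X l (u - v) ≤ 2 * quadInv X l u + 2 * quadInv X l v := by
  simp only [quadInv_eq_sum hdet, mulVec_sub, dotProduct_sub, mul_sum, ← sum_add_distrib]
  refine sum_le_sum fun x _ => ?_
  have := mul_nonneg (hl x) (sq_nonneg (x ⬝ᵥ (designMat X l)⁻¹ *ᵥ u + x ⬝ᵥ (designMat X l)⁻¹ *ᵥ v))
  nlinarith

/-- Cauchy–Schwarz for the weights `λ` gives `(yᵀy)² ≤ (∑ λ_x (xᵀy)²) · yᵀA(λ)⁻¹y`, and
`∑ λ_x (xᵀy)² ≤ yᵀy` because `‖x‖ ≤ 1`. -/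
lemma dotProduct_self_le_quadInv (hl : l ∈ designSimplex X) (hnorm : ∀ x ∈ X, x ⬝ᵥ x ≤ 1)
    (hdet : IsUnit (designMat X l).det) (y : Fin d → ℝ) : y ⬝ᵥ y ≤ quadInv X l y := by
  set z := (designMat X l)⁻¹ *ᵥ y
  have hyz : y ⬝ᵥ y = ∑ x ∈ X, l x * (x ⬝ᵥ y) * (x ⬝ᵥ z) := by
    rw [← dotProduct_designMat_mulVec, mulVec_mulVec, mul_nonsing_inv _ hdet, one_mulVec]
  have hyy : 0 ≤ y ⬝ᵥ y := by simpa using dotProduct_star_self_nonneg y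
  have hproj : ∑ x ∈ X, l x * (x ⬝ᵥ y) ^ 2 ≤ y ⬝ᵥ y := by
    calc ∑ x ∈ X, l x * (x ⬝ᵥ y) ^ 2 ≤ ∑ x ∈ X, l x * (y ⬝ᵥ y) := by
          refine sum_le_sum fun x hx => mul_le_mul_of_nonneg_left ?_ (hl.1 x)
          have hcs : (x ⬝ᵥ y) ^ 2 ≤ (x ⬝ᵥ x) * (y ⬝ᵥ y) := by
            simpa only [dotProduct, sq] using sum_mul_sq_le_sq_mul_sq univ x y
          nlinarith [hnorm x hx]
      _ = y ⬝ᵥ y := by rw [← sum_mul, hl.2, one_mul]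
  have hcs : (y ⬝ᵥ y) ^ 2 ≤ (∑ x ∈ X, l x * (x ⬝ᵥ y) ^ 2) * quadInv X l y := by
    rw [hyz, quadInv_eq_sum hdet]
    exact sum_sq_le_sum_mul_sum_of_sq_le_mul X (fun x _ => mul_nonneg (hl.1 x) (sq_nonneg _))
      (fun x _ => mul_nonneg (hl.1 x) (sq_nonneg _)) fun x _ => le_of_eq (by ring)
  have hq := quadInv_nonneg hl.1 hdet y
  rcases hyy.eq_or_lt with h | h
  · rw [← h]; exact hq
  · nlinarith [mul_le_mul_of_nonneg_right hproj hq]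

end Design

lemma sSup_insert_zero_nonneg (s : Set ℝ) : 0 ≤ sSup (insert 0 s) :=
  Real.sSup_nonneg' ⟨0, Set.mem_insert _ _, le_rfl⟩

lemma le_sSup_insert_zero_image {α : Type*} {A : Set α} (hA : A.Finite) (f : α → ℝ) {y : α}
    (hy : y ∈ A) : f y ≤ sSup (insert 0 (f '' A)) :=
  le_csSup ((hA.image f).insert 0).bddAbove (Set.mem_insert_of_mem _ ⟨y, hy, rfl⟩)

section Rho

variable {d : ℕ} {X : Finset (Fin d → ℝ)}

lemma exists_design (hspan : Submodule.span ℝ (X : Set (Fin d → ℝ)) = ⊤) (hne : X.Nonempty) :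
    ∃ l ∈ designSimplex X, IsUnit (designMat X l).det := by
  have hcard : (#X : ℝ) ≠ 0 := Nat.cast_ne_zero.mpr hne.card_pos.ne'
  refine ⟨fun _ => (#X : ℝ)⁻¹, ⟨fun _ => by positivity, by simp [hcard]⟩, ?_⟩
  rw [isUnit_iff_ne_zero, Ne, ← exists_mulVec_eq_zero_iff]
  rintro ⟨v, hv, hAv⟩
  have horth : ∀ x ∈ X, x ⬝ᵥ v = 0 := by
    have hsum := dotProduct_designMat_mulVec X (fun _ => (#X : ℝ)⁻¹) v v
    rw [hAv, dotProduct_zero, eq_comm, sum_eq_zero_iff_of_nonneg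
      fun x _ => by rw [mul_assoc]; exact mul_nonneg (by positivity) (mul_self_nonneg _)] at hsum
    intro x hx
    simpa [hcard] using hsum x hx
  have hspan_orth : ∀ w ∈ Submodule.span ℝ (X : Set (Fin d → ℝ)), w ⬝ᵥ v = 0 := fun w hw => by
    induction hw using Submodule.span_induction with
    | mem x hx => exact horth x hx
    | zero => exact zero_dotProduct v
    | add x y _ _ hx hy => rw [add_dotProduct, hx, hy, add_zero]
    | smul c x _ hx => rw [smul_dotProduct, hx, smul_zero]
  exact hv (dotProduct_self_eq_zero.mp (hspan_orth v (hspan ▸ Submodule.mem_top)))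

lemma rho_nonneg (A : Set (Fin d → ℝ)) : 0 ≤ rho X A :=
  Real.sInf_nonneg fun _ ⟨_, _, _, hv⟩ => hv ▸ sSup_insert_zero_nonneg _

lemma rho_le_sSup {A : Set (Fin d → ℝ)} {l : (Fin d → ℝ) → ℝ} (hl : l ∈ designSimplex X)
    (hdet : IsUnit (designMat X l).det) : rho X A ≤ sSup (insert 0 (quadInv X l '' A)) :=
  csInf_le ⟨0, fun _ ⟨_, _, _, hv⟩ => hv ▸ sSup_insert_zero_nonneg _⟩ ⟨l, hl, hdet, rfl⟩

lemma rho_mono (hex : ∃ l ∈ designSimplex X, IsUnit (designMat X l).det)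
    {A B : Set (Fin d → ℝ)} (hB : B.Finite) (hAB : A ⊆ B) : rho X A ≤ rho X B := by
  obtain ⟨l₀, hl₀, hdet₀⟩ := hex
  refine le_csInf ⟨_, l₀, hl₀, hdet₀, rfl⟩ ?_
  rintro _ ⟨l, hl, hdet, rfl⟩
  exact (rho_le_sSup hl hdet).trans <| csSup_le_csSup ((hB.image _).insert 0).bddAbove
    ⟨0, Set.mem_insert _ _⟩ (Set.insert_subset_insert (Set.image_mono hAB))

lemma rho_pos (hex : ∃ l ∈ designSimplex X, IsUnit (designMat X l).det)
    (hnorm : ∀ x ∈ X, x ⬝ᵥ x ≤ 1) {A : Set (Fin d → ℝ)} (hA : A.Finite) {y : Fin d → ℝ}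
    (hy : y ∈ A) (hy0 : y ≠ 0) : 0 < rho X A := by
  obtain ⟨l₀, hl₀, hdet₀⟩ := hex
  have hyy : 0 < y ⬝ᵥ y := lt_of_le_of_ne (by simpa using dotProduct_star_self_nonneg y)
    (Ne.symm (dotProduct_self_eq_zero.not.mpr hy0))
  refine hyy.trans_le (le_csInf ⟨_, l₀, hl₀, hdet₀, rfl⟩ ?_)
  rintro _ ⟨l, hl, hdet, rfl⟩
  exact (dotProduct_self_le_quadInv hl hnorm hdet y).trans (le_sSup_insert_zero_image hA _ hy)

lemma Yset_finite {S : Set (Fin d → ℝ)} (hS : S.Finite) : (Yset S).Finite :=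
  (hS.image2 (· - ·) hS).subset fun _ ⟨_, hx, _, hx', _, hy⟩ => hy ▸ Set.mem_image2_of_mem hx hx'

variable {θstar xstar : Fin d → ℝ}

lemma YstarSet_subset_Yset {S : Set (Fin d → ℝ)} (hxstar : xstar ∈ S) :
    YstarSet xstar S ⊆ Yset S :=
  fun _ ⟨x, ⟨hx, hxne⟩, hy⟩ => ⟨xstar, hxstar, x, hx, Ne.symm hxne, hy.symm⟩

lemma psiStar_nonneg : 0 ≤ psiStar X θstar xstar :=
  Real.sInf_nonneg fun _ ⟨_, _, _, hv⟩ => hv ▸ sSup_insert_zero_nonneg _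

lemma rho_Yset_le_psiStar (hex : ∃ l ∈ designSimplex X, IsUnit (designMat X l).det)
    {S : Set (Fin d → ℝ)} (hSX : S ⊆ X) {δ : ℝ} (hδ : 0 < δ)
    (hgap : ∀ x ∈ S, x ≠ xstar → 0 < θstar ⬝ᵥ (xstar - x) ∧ θstar ⬝ᵥ (xstar - x) ≤ δ) :
    rho X (Yset S) ≤ 4 * δ ^ 2 * psiStar X θstar xstar := by
  obtain ⟨l₀, hl₀, hdet₀⟩ := hex
  have hc : 0 < 4 * δ ^ 2 := by positivity
  rw [← div_le_iff₀' hc]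
  refine le_csInf ⟨_, l₀, hl₀, hdet₀, rfl⟩ ?_
  rintro _ ⟨l, hl, hdet, rfl⟩
  rw [div_le_iff₀' hc]
  set v := sSup (insert 0 ((fun x => quadInv X l (x - xstar) / (θstar ⬝ᵥ (xstar - x)) ^ 2) ''
    ((X : Set (Fin d → ℝ)) \ {xstar})))
  have hv : 0 ≤ v := sSup_insert_zero_nonneg _
  have hS : ∀ x ∈ S, quadInv X l (x - xstar) ≤ δ ^ 2 * v := by
    intro x hx
    by_cases hxs : x = xstar
    · simpa [hxs, quadInv] using mul_nonneg (sq_nonneg δ) hv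
    obtain ⟨hpos, hle⟩ := hgap x hx hxs
    have hxv := le_sSup_insert_zero_image (A := (X : Set (Fin d → ℝ)) \ {xstar})
      (X.finite_toSet.subset Set.sdiff_subset)
      (fun x => quadInv X l (x - xstar) / (θstar ⬝ᵥ (xstar - x)) ^ 2) ⟨hSX hx, hxs⟩
    rw [div_le_iff₀ (by positivity)] at hxv
    exact hxv.trans (by rw [mul_comm]; gcongr)
  calc rho X (Yset S) ≤ sSup (insert 0 (quadInv X l '' Yset S)) := rho_le_sSup hl hdet
    _ ≤ 4 * δ ^ 2 * v := by
      refine Real.sSup_le ?_ (by positivity)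
      rintro _ (rfl | ⟨_, ⟨x, hx, x', hx', -, rfl⟩, rfl⟩)
      · positivity
      · have hsub := quadInv_sub_le hl.1 hdet (x - xstar) (x' - xstar)
        rw [sub_sub_sub_cancel_right] at hsub
        linarith [hS x hx, hS x' hx']

end Rho

lemma pow_card_filter_mul_le {f : ℕ → ℝ} {c : ℝ} (hc : 0 ≤ c) (p : ℕ → Prop) [DecidablePred p]
    {n : ℕ} (hmono : ∀ r, 1 ≤ r → r ≤ n → f r ≤ f (r + 1))
    (hgrow : ∀ r, 1 ≤ r → r ≤ n → p r → c * f r ≤ f (r + 1)) :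
    c ^ #{r ∈ Icc 1 n | p r} * f 1 ≤ f (n + 1) := by
  induction n with
  | zero => simp
  | succ n ih =>
    have ih := ih (fun r h1 h2 => hmono r h1 (by omega)) (fun r h1 h2 => hgrow r h1 (by omega))
    rw [← insert_Icc_right_eq_Icc_add_one (by omega), filter_insert]
    split_ifs with hp
    · rw [card_insert_of_notMem (by simp), pow_succ, mul_right_comm]
      exact (mul_le_mul_of_nonneg_right ih hc).trans (by linarith [hgrow _ (by omega) le_rfl hp])
    · exact ih.trans (hmono _ (by omega) le_rfl)

lemma le_card_filter_not_add_card_filter (p : ℕ → Prop) [DecidablePred p] (n : ℕ) :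
    n ≤ #{r ∈ Icc 1 (n + 1) | ¬p r} + #{r ∈ Icc 1 n | p r} := by
  have hsplit : #{r ∈ Icc 1 (n + 1) | p r} + #{r ∈ Icc 1 (n + 1) | ¬p r} = n + 1 := by
    rw [card_filter_add_card_filter_not, Nat.card_Icc, add_tsub_cancel_right]
  have hlast : #{r ∈ Icc 1 (n + 1) | p r} ≤ #{r ∈ Icc 1 n | p r} + 1 := by
    rw [← insert_Icc_right_eq_Icc_add_one (by omega), filter_insert]
    split_ifs
    · exact card_insert_le _ _
    · omega
  omega

lemma natCast_le_logb_of_pow_le {b y : ℝ} (hb : 1 < b) {n : ℕ} (h : b ^ n ≤ y) :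
    (n : ℝ) ≤ Real.logb b y := by
  rw [Real.le_logb_iff_rpow_le hb ((pow_pos (by linarith) n).trans_le h), Real.rpow_natCast]
  exact h

lemma natCast_le_add_two_add_logb {R α s : ℕ} {ρ B : ℝ} (hR : R ≤ α + s + 2) (hρ : 0 < ρ)
    (h : (5 / 4) ^ s * ρ ≤ B) : (R : ℝ) ≤ α + 2 + Real.logb (5 / 4) (B / ρ) := by
  have hs := natCast_le_logb_of_pow_le (by norm_num) ((le_div_iff₀ hρ).mpr h)
  have hR' : (R : ℝ) ≤ α + s + 2 := by exact_mod_cast hR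
  linarith


/-- `H_r` is `fourPowSum (roundCost X θstar xstar) T̄_r`. -/
def fourPowSum (a : ℕ → ℝ) (n : ℕ) : ℝ := ∑ t ∈ Icc 1 n, 4 ^ t * a t

section FourPowSum

variable {a : ℕ → ℝ}

lemma fourPowSum_one : fourPowSum a 1 = 4 * a 1 := by simp [fourPowSum]

lemma fourPowSum_mono (ha : ∀ t, 0 ≤ a t) : Monotone (fourPowSum a) := fun _ _ hmn =>
  sum_le_sum_of_subset_of_nonneg (Icc_subset_Icc_right hmn) fun t _ _ =>
    mul_nonneg (by positivity) (ha t)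

lemma fourPowSum_add_le (ha : ∀ t, 0 ≤ a t) {m n : ℕ} (hmn : m < n) :
    fourPowSum a m + 4 ^ n * a n ≤ fourPowSum a n := by
  have hsplit : fourPowSum a n = fourPowSum a (n - 1) + 4 ^ n * a n := by
    obtain ⟨k, rfl⟩ : ∃ k, n = k + 1 := ⟨n - 1, by omega⟩
    rw [fourPowSum, ← insert_Icc_right_eq_Icc_add_one (by omega), sum_insert (by simp),
      add_comm, Nat.add_sub_cancel, fourPowSum]
  rw [hsplit]
  gcongr
  exact fourPowSum_mono ha (by omega)

lemma fourPowSum_le {B : ℝ} (hB : ∀ t, 4 ^ t * a t ≤ B) (n : ℕ) : fourPowSum a n ≤ n * B := by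
  simpa [fourPowSum] using sum_le_sum fun t (_ : t ∈ Icc 1 n) => hB t

lemma fourPowSum_nonneg (ha : ∀ t, 0 ≤ a t) (n : ℕ) : 0 ≤ fourPowSum a n :=
  sum_nonneg fun t _ => mul_nonneg (by positivity) (ha t)

lemma lt_of_four_mul_four_pow_add_div_lt (ha : ∀ t, 0 ≤ a t) {T T' : ℕ}
    (h : 4 * 4 ^ T + fourPowSum a T / a T < 4 ^ (T' + 1)) : T < T' := by
  have hS := div_nonneg (fourPowSum_nonneg ha T) (ha T)
  have : (4 : ℝ) ^ (T + 1) < 4 ^ (T' + 1) := by rw [pow_succ']; linarith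
  have := (pow_lt_pow_iff_right₀ (by norm_num : (1 : ℝ) < 4)).mp this
  omega

lemma five_div_four_mul_fourPowSum_le (ha : ∀ t, 0 ≤ a t) {T T' : ℕ} (hpos : 0 < a T)
    (hstall : a T' = a T) (h : 4 * 4 ^ T + fourPowSum a T / a T < 4 ^ (T' + 1)) :
    5 / 4 * fourPowSum a T ≤ fourPowSum a T' := by
  have htop := fourPowSum_add_le ha (lt_of_four_mul_four_pow_add_div_lt ha h)
  rw [hstall] at htop
  have h' := mul_lt_mul_of_pos_right h hpos
  rw [add_mul, div_mul_cancel₀ _ hpos.ne', pow_succ] at h'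
  nlinarith [mul_nonneg (pow_nonneg (by norm_num : (0 : ℝ) ≤ 4) T) hpos.le]

lemma five_div_four_pow_card_mul_fourPowSum_le (ha : ∀ t, 0 ≤ a t) {T : ℕ → ℕ}
    (p : ℕ → Prop) [DecidablePred p] {n : ℕ}
    (hrec : ∀ r, 1 ≤ r → r ≤ n →
      4 * 4 ^ T r + fourPowSum a (T r) / a (T r) < 4 ^ (T (r + 1) + 1))
    (hpos : ∀ r, 1 ≤ r → r ≤ n → p r → 0 < a (T r))
    (hstall : ∀ r, 1 ≤ r → r ≤ n → p r → a (T (r + 1)) = a (T r)) :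
    (5 / 4) ^ #{r ∈ Icc 1 n | p r} * fourPowSum a (T 1) ≤ fourPowSum a (T (n + 1)) :=
  pow_card_filter_mul_le (by norm_num) p
    (fun r h1 hn => fourPowSum_mono ha (lt_of_four_mul_four_pow_add_div_lt ha (hrec r h1 hn)).le)
    fun r h1 hn hp => five_div_four_mul_fourPowSum_le ha (hpos r h1 hn hp) (hstall r h1 hn hp)
      (hrec r h1 hn)

end FourPowSum


section Schedule

variable {d : ℕ} (X : Finset (Fin d → ℝ)) (θstar xstar : Fin d → ℝ)

/-- The paper's `U_r` is `eliminated X θstar xstar T̄_r`, since `√L̄_r = 2^{T̄_r}`. -/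
def eliminated (t : ℕ) : Finset (Fin d → ℝ) :=
  X.filter fun x => 15 / 2 ^ t < θstar ⬝ᵥ (xstar - x)

def roundCost (t : ℕ) : ℝ :=
  rho X (Yset ((X : Set (Fin d → ℝ)) \ eliminated X θstar xstar t))

variable {X θstar xstar}

lemma mem_eliminated {t : ℕ} {x : Fin d → ℝ} :
    x ∈ eliminated X θstar xstar t ↔ x ∈ X ∧ 15 / 2 ^ t < θstar ⬝ᵥ (xstar - x) :=
  mem_filter

lemma xstar_notMem_eliminated (t : ℕ) : xstar ∉ eliminated X θstar xstar t := fun h => by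
  have := (mem_eliminated.mp h).2
  rw [sub_self, dotProduct_zero] at this
  exact (lt_asymm this) (by positivity)

lemma eliminated_one (hgap : ∀ x ∈ X, θstar ⬝ᵥ (xstar - x) ≤ 15 / 2) :
    eliminated X θstar xstar 1 = ∅ :=
  filter_false_of_mem fun x hx => by rw [pow_one]; exact (hgap x hx).not_gt

lemma setOf_mem_eliminated_and_lt {t T : ℕ} (htT : t ≤ T) :
    {x | x ∈ eliminated X θstar xstar T ∧ 15 / 2 ^ t < θstar ⬝ᵥ (xstar - x)} =
      eliminated X θstar xstar t := by
  ext x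
  rw [Set.mem_ofPred_eq, mem_coe, mem_eliminated, mem_eliminated, and_assoc]
  refine and_congr_right fun _ => and_iff_right_of_imp fun h => lt_of_le_of_lt ?_ h
  gcongr
  norm_num

lemma filter_sqrt_four_pow_eq_eliminated (T : ℕ) :
    X.filter (fun x => 15 / Real.sqrt (4 ^ T) < θstar ⬝ᵥ (xstar - x)) =
      eliminated X θstar xstar T := by
  rw [show (4 : ℝ) ^ T = (2 ^ T) ^ 2 by rw [← pow_mul, mul_comm, pow_mul]; norm_num,
    Real.sqrt_sq (by positivity)]
  rfl

lemma sum_four_pow_mul_rho_eq_fourPowSum (T : ℕ) :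
    ∑ t ∈ Icc 1 T, (4 : ℝ) ^ t * rho X (Yset ((X : Set (Fin d → ℝ)) \
      {x | x ∈ eliminated X θstar xstar T ∧ 15 / 2 ^ t < θstar ⬝ᵥ (xstar - x)})) =
      fourPowSum (roundCost X θstar xstar) T :=
  sum_congr rfl fun t ht => by rw [setOf_mem_eliminated_and_lt (mem_Icc.mp ht).2]; rfl

lemma rho_YstarSet_le_fourPowSum_roundCost_one
    (hex : ∃ l ∈ designSimplex X, IsUnit (designMat X l).det) (hxstar : xstar ∈ X)
    (hgap : ∀ x ∈ X, θstar ⬝ᵥ (xstar - x) ≤ 15 / 2) :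
    rho X (YstarSet xstar X) ≤ fourPowSum (roundCost X θstar xstar) 1 := by
  have hρ := rho_mono hex (Yset_finite X.finite_toSet) (YstarSet_subset_Yset hxstar)
  simp only [fourPowSum_one, roundCost, eliminated_one hgap, coe_empty, Set.sdiff_empty]
  linarith [rho_nonneg (X := X) (Yset X)]

lemma rho_YstarSet_pos (hex : ∃ l ∈ designSimplex X, IsUnit (designMat X l).det)
    (hnorm : ∀ x ∈ X, x ⬝ᵥ x ≤ 1) (hxstar : xstar ∈ X) {x : Fin d → ℝ} (hx : x ∈ X)
    (hxne : x ≠ xstar) : 0 < rho X (YstarSet xstar X) :=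
  rho_pos hex hnorm ((Yset_finite X.finite_toSet).subset (YstarSet_subset_Yset hxstar))
    ⟨x, ⟨hx, hxne⟩, rfl⟩ (sub_ne_zero.mpr hxne.symm)

lemma exists_notMem_eliminated {t : ℕ} (h : eliminated X θstar xstar t ≠ X.erase xstar) :
    ∃ x ∈ X, x ≠ xstar ∧ x ∉ eliminated X θstar xstar t := by
  have hsub : eliminated X θstar xstar t ⊆ X.erase xstar := fun x hx =>
    mem_erase.mpr ⟨fun hx' => xstar_notMem_eliminated t (hx' ▸ hx), (mem_eliminated.mp hx).1⟩
  obtain ⟨x, hx, hxU⟩ := exists_of_ssubset (hsub.ssubset_of_ne h)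
  exact ⟨x, mem_of_mem_erase hx, ne_of_mem_erase hx, hxU⟩

lemma roundCost_pos (hex : ∃ l ∈ designSimplex X, IsUnit (designMat X l).det)
    (hnorm : ∀ x ∈ X, x ⬝ᵥ x ≤ 1) (hxstar : xstar ∈ X) {t : ℕ}
    (h : eliminated X θstar xstar t ≠ X.erase xstar) : 0 < roundCost X θstar xstar t := by
  obtain ⟨x, hx, hxne, hxU⟩ := exists_notMem_eliminated h
  exact rho_pos hex hnorm (Yset_finite (X.finite_toSet.subset Set.sdiff_subset))
    ⟨xstar, ⟨hxstar, xstar_notMem_eliminated t⟩, x, ⟨hx, hxU⟩, hxne.symm, rfl⟩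
    (sub_ne_zero.mpr hxne.symm)

lemma four_pow_mul_roundCost_le (hex : ∃ l ∈ designSimplex X, IsUnit (designMat X l).det)
    (hgap : ∀ x ∈ X, x ≠ xstar → 0 < θstar ⬝ᵥ (xstar - x)) (t : ℕ) :
    4 ^ t * roundCost X θstar xstar t ≤ 900 * psiStar X θstar xstar := by
  have hρ := rho_Yset_le_psiStar hex Set.sdiff_subset (by positivity : (0 : ℝ) < 15 / 2 ^ t)
    fun x ⟨hx, hxU⟩ hxne => ⟨hgap x hx hxne, not_lt.mp fun h => hxU (mem_eliminated.mpr ⟨hx, h⟩)⟩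
  calc 4 ^ t * roundCost X θstar xstar t ≤ 4 ^ t * (4 * (15 / 2 ^ t) ^ 2 * psiStar X θstar xstar) :=
        mul_le_mul_of_nonneg_left hρ (by positivity)
    _ = 900 * psiStar X θstar xstar := by
        rw [div_pow, ← pow_mul, mul_comm t, pow_mul]
        field_simp
        ring

lemma fourPowSum_roundCost_le (hex : ∃ l ∈ designSimplex X, IsUnit (designMat X l).det)
    (hgap : ∀ x ∈ X, x ≠ xstar → 0 < θstar ⬝ᵥ (xstar - x)) {Δ : ℝ} (hΔ : 0 < Δ) {T : ℕ}
    {x : Fin d → ℝ} (hx : x ∈ X) (hxΔ : Δ ≤ θstar ⬝ᵥ (xstar - x))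
    (hxU : x ∉ eliminated X θstar xstar T) :
    fourPowSum (roundCost X θstar xstar) T ≤
      900 * Real.logb 2 (15 / Δ) * psiStar X θstar xstar := by
  have hT : (T : ℝ) ≤ Real.logb 2 (15 / Δ) := by
    refine natCast_le_logb_of_pow_le one_lt_two ((le_div_iff₀ hΔ).mpr ?_)
    have := hxΔ.trans (not_lt.mp fun h => hxU (mem_eliminated.mpr ⟨hx, h⟩))
    rwa [le_div_iff₀ (by positivity), mul_comm] at this
  calc fourPowSum (roundCost X θstar xstar) T ≤ T * (900 * psiStar X θstar xstar) :=
        fourPowSum_le (four_pow_mul_roundCost_le hex hgap) T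
    _ ≤ Real.logb 2 (15 / Δ) * (900 * psiStar X θstar xstar) := by
        gcongr
        linarith [psiStar_nonneg (X := X) (θstar := θstar) (xstar := xstar)]
    _ = _ := by ring

end Schedule

theorem linear_batch_complexity_bound {d : ℕ} (X : Finset (Fin d → ℝ))
    (θstar xstar : Fin d → ℝ)
    (hspan : Submodule.span ℝ (X : Set (Fin d → ℝ)) = ⊤)
    (hnorm : ∀ x ∈ X, x ⬝ᵥ x ≤ 1)
    (hxstar : xstar ∈ X)
    (hmax : ∀ x ∈ X, x ≠ xstar → θstar ⬝ᵥ x < θstar ⬝ᵥ xstar)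
    (hgap : ∀ x ∈ X, θstar ⬝ᵥ (xstar - x) ≤ 15 / 2)
    (Δ₂ : ℝ)
    (hΔ₂mem : ∃ x ∈ X, x ≠ xstar ∧ Δ₂ = θstar ⬝ᵥ (xstar - x))
    (hΔ₂min : ∀ x ∈ X, x ≠ xstar → Δ₂ ≤ θstar ⬝ᵥ (xstar - x))
    (Tbar : ℕ → ℕ) (Lbar Lhat : ℕ → ℝ) (U : ℕ → Finset (Fin d → ℝ)) (H : ℕ → ℝ)
    (R : ℕ) (hR1 : 1 ≤ R)
    (hT1 : Tbar 1 = 1)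
    (hLbar : ∀ r, Lbar r = 4 ^ Tbar r)
    (hU : ∀ r, U r = X.filter (fun x => 15 / Real.sqrt (Lbar r) < θstar ⬝ᵥ (xstar - x)))
    (hH : ∀ r, H r = ∑ t ∈ Finset.Icc 1 (Tbar r), (4 : ℝ) ^ t *
      rho X (Yset ((X : Set (Fin d → ℝ)) \
        {x | x ∈ U r ∧ 15 / 2 ^ t < θstar ⬝ᵥ (xstar - x)})))
    (hLhat : ∀ r, 1 ≤ r → r < R →
      Lhat (r + 1) = 4 * Lbar r + H r / rho X (Yset ((X : Set (Fin d → ℝ)) \ ↑(U r))))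
    (hTsucc : ∀ r, 1 ≤ r → r < R →
      (4 : ℝ) ^ Tbar (r + 1) ≤ Lhat (r + 1) ∧ Lhat (r + 1) < (4 : ℝ) ^ (Tbar (r + 1) + 1))
    (hRmem : U R = X.erase xstar)
    (hRleast : ∀ r, 1 ≤ r → r < R → U r ≠ X.erase xstar)
    (α : ℕ)
    (hα : α = ((Finset.Icc 1 (R - 1)).filter (fun r => U r ≠ U (r + 1))).card) :
    (R : ℝ) ≤ α + 2 + Real.logb (5 / 4)
      (900 * Real.logb 2 (15 / Δ₂) * psiStar X θstar xstar /
        rho X (YstarSet xstar (X : Set (Fin d → ℝ)))) := by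
  obtain ⟨x₂, hx₂, hx₂ne, rfl⟩ := hΔ₂mem
  have hex := exists_design hspan ⟨xstar, hxstar⟩
  have hΔ : ∀ x ∈ X, x ≠ xstar → 0 < θstar ⬝ᵥ (xstar - x) := fun x hx hne => by
    simpa [dotProduct_sub] using hmax x hx hne
  have hUT : ∀ r, U r = eliminated X θstar xstar (Tbar r) := fun r => by
    rw [hU, hLbar, filter_sqrt_four_pow_eq_eliminated]
  have hHT : ∀ r, H r = fourPowSum (roundCost X θstar xstar) (Tbar r) := fun r => by
    rw [hH, hUT, sum_four_pow_mul_rho_eq_fourPowSum]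
  obtain ⟨m, rfl⟩ : ∃ m, R = m + 2 := by
    have hU1 : U 1 ≠ X.erase xstar := by
      rw [hUT, hT1, eliminated_one hgap]
      exact (ne_empty_of_mem (mem_erase.mpr ⟨hx₂ne, hx₂⟩)).symm
    exact ⟨R - 2, by have : R ≠ 1 := fun h => hU1 (h ▸ hRmem); omega⟩
  have hgrowth := five_div_four_pow_card_mul_fourPowSum_le
    (a := roundCost X θstar xstar) (T := Tbar) (n := m) (fun t => rho_nonneg _)
    (fun r => U r = U (r + 1))
    (fun r h1 hr => by
      have := (hTsucc r h1 (by omega)).2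
      rwa [hLhat r h1 (by omega), hLbar, hHT, hUT] at this)
    (fun r h1 hr _ => roundCost_pos hex hnorm hxstar (hUT r ▸ hRleast r h1 (by omega)))
    fun r _ _ hp => by simp only [roundCost, ← hUT, hp]
  obtain ⟨x, hx, hxne, hxU⟩ :=
    exists_notMem_eliminated (hUT (m + 1) ▸ hRleast (m + 1) (by omega) (by omega))
  refine natCast_le_add_two_add_logb (s := #{r ∈ Icc 1 m | U r = U (r + 1)}) ?_
    (rho_YstarSet_pos hex hnorm hxstar hx₂ hx₂ne) ?_
  · rw [hα]
    simpa using le_card_filter_not_add_card_filter (fun r => U r = U (r + 1)) m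
  calc _ ≤ (5 / 4) ^ #{r ∈ Icc 1 m | U r = U (r + 1)} *
        fourPowSum (roundCost X θstar xstar) (Tbar 1) := by
        rw [hT1]
        gcongr
        exact rho_YstarSet_le_fourPowSum_roundCost_one hex hxstar hgap
    _ ≤ _ := hgrowth.trans
        (fourPowSum_roundCost_le hex hΔ (hΔ x₂ hx₂ hx₂ne) hx (hΔ₂min x hx hxne) hxU)
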